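/- arXiv:2403.13080 — 2 statements merged into one kernel-verified Lean document; each statement's English description precedes it below -/
import Mathlib

section
/- Let p be a prime, n a positive integer, and S a subset of 𝔽_p^n with |S| > (p^n − 1)/(p − 1). Then every point P ∈ 𝔽_p^n lies on an affine line passing through two distinct points of S; i.e., there exist distinct v, w ∈ S and t ∈ 𝔽_p such that P = v + t·(w − v). -/
/-!
If `P` lies on no line through two distinct points of `S`, then `P ∉ S` and the directions
`s - P`, for `s ∈ S`, are pairwise non-proportional: two proportional directions would put `P`
on the line through the two points. Hence `s ↦ [s - P]` embeds `S` into the projective space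
`ℙ(𝔽_p^n)`, which has `(p^n - 1)/(p - 1)` points.
-/

open scoped LinearAlgebra.Projectivization

section

variable {k V : Type*} [DivisionRing k] [AddCommGroup V] [Module k V]

theorem exists_eq_add_smul_sub_of_smul_sub_eq {P v w : V} {a : k} (hvw : v ≠ w)
    (ha : a • (w - P) = v - P) : ∃ t : k, P = v + t • (w - v) := by
  have ha1 : 1 - a ≠ 0 := by
    intro h
    rw [← sub_eq_zero.mp h, one_smul, sub_left_inj] at ha
    exact hvw ha.symm
  have hwv : w - v = (1 - a) • (w - P) := by
    rw [sub_smul, one_smul, ha]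
    abel
  refine ⟨-a * (1 - a)⁻¹, ?_⟩
  rw [hwv, smul_smul, mul_assoc, inv_mul_cancel₀ ha1, mul_one, neg_smul, ha]
  abel

theorem card_le_card_projectivization_of_notMem_line [Finite V] {S : Finset V} {P : V}
    (hPS : P ∉ S) (hline : ∀ v ∈ S, ∀ w ∈ S, v ≠ w → ∀ t : k, P ≠ v + t • (w - v)) :
    S.card ≤ Nat.card (ℙ k V) := by
  have hne : ∀ s : S, (s : V) - P ≠ 0 := fun s h =>
    hPS (sub_eq_zero.mp h ▸ s.2)
  let direction : S → ℙ k V := fun s => Projectivization.mk k ((s : V) - P) (hne s)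
  have hinj : Function.Injective direction := by
    rintro v w hvw
    obtain ⟨a, ha⟩ := (Projectivization.mk_eq_mk_iff' k _ _ (hne v) (hne w)).mp hvw
    by_contra h
    obtain ⟨t, ht⟩ := exists_eq_add_smul_sub_of_smul_sub_eq (Subtype.coe_ne_coe.mpr h) ha
    exact hline v v.2 w w.2 (Subtype.coe_ne_coe.mpr h) t ht
  simpa using Nat.card_le_card_of_injective direction hinj

end

theorem stmt_0 (p : ℕ) (hp : p.Prime) (n : ℕ) (hn : 0 < n)
    (S : Finset (Fin n → ZMod p)) (hS : S.card > (p ^ n - 1) / (p - 1)) :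
    ∀ P : Fin n → ZMod p, ∃ v ∈ S, ∃ w ∈ S, v ≠ w ∧
      ∃ t : ZMod p, P = v + t • (w - v) := by
  have : Fact p.Prime := ⟨hp⟩
  have : Nonempty (Fin n) := ⟨⟨0, hn⟩⟩
  intro P
  by_contra! hline
  have hcard : Nat.card (ℙ (ZMod p) (Fin n → ZMod p)) = (p ^ n - 1) / (p - 1) := by
    simp [Projectivization.card'']
  have hS2 : 1 < S.card := lt_of_le_of_lt (Nat.card_pos.trans_eq hcard) hS
  have hPS : P ∉ S := fun hP => by
    obtain ⟨w, hw, hwP⟩ := S.exists_mem_ne hS2 P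
    exact hline P hP w hw hwP.symm 0 (by simp)
  have := card_le_card_projectivization_of_notMem_line hPS hline
  omega
end

section
/- Let p be a prime, n a positive integer, and S a subset of 𝔽_p^n with |S| > (p^n − 1)/(p − 1). Then every point Q ∈ 𝔽_p^n can be written as Q = k·v + (p − 1 − k)·w for some v, w ∈ S and some natural number k with 0 ≤ k ≤ p − 1 (where the natural numbers k and p − 1 − k act on 𝔽_p^n by repeated addition, i.e., via their images in ZMod p). -/
/-!
Translate `S` by `Q`. Since `p - 1 - k ≡ -1 - k` in `𝔽_p`, the required identity reads
`w + Q = k • (v - w)`, and it has a solution with `v, w ∈ S` as soon as the translate `S + Q`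
contains `0` or two distinct points `x ≠ y` on a common line through the origin, `y = a • x`
(take `k = (a - 1)⁻¹`). A translate avoiding `0` with no two points on a common line injects
into the projective space `ℙ(𝔽_p^n)`, which has `(p^n - 1)/(p - 1)` points.
-/

open Finset

open scoped LinearAlgebra.Projectivization

theorem Projectivization.exists_ne_eq_smul_of_card_lt {K V : Type*} [Field K] [Finite K]
    [AddCommGroup V] [Module K V] [Finite V] {T : Finset V} (h0 : (0 : V) ∉ T)
    (hT : (Nat.card V - 1) / (Nat.card K - 1) < #T) :
    ∃ x ∈ T, ∃ y ∈ T, x ≠ y ∧ ∃ a : K, y = a • x := by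
  classical
  have : Fintype (ℙ K V) := Fintype.ofFinite _
  have hcard : #(univ : Finset (ℙ K V)) < #(T.subtype (· ≠ 0)) := by
    rwa [card_univ, Fintype.card_eq_nat_card, card'', card_subtype, filter_true_of_mem]
    exact fun x hx hx0 => h0 (hx0 ▸ hx)
  obtain ⟨x, hx, y, hy, hxy, hmk⟩ :=
    exists_ne_map_eq_of_card_lt_of_maps_to hcard (f := mk' K) (fun _ _ => mem_coe.2 (mem_univ _))
  obtain ⟨a, ha⟩ := (mk_eq_mk_iff K _ _ y.2 x.2).1 hmk.symm
  exact ⟨x, mem_subtype.1 hx, y, mem_subtype.1 hy, Subtype.coe_ne_coe.2 hxy, a, ha.symm⟩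

theorem ZMod.exists_nsmul_add_nsmul_eq {p : ℕ} [NeZero p] {M : Type*} [AddCommGroup M]
    [Module (ZMod p) M] (c : ZMod p) (v w : M) :
    ∃ k ≤ p - 1, k • v + (p - 1 - k) • w = c • (v - w) - w := by
  have hc : c.val ≤ p - 1 := Nat.le_sub_one_of_lt c.val_lt
  refine ⟨c.val, hc, ?_⟩
  rw [← Nat.cast_smul_eq_nsmul (ZMod p), ← Nat.cast_smul_eq_nsmul (ZMod p), Nat.cast_sub hc,
    Nat.cast_sub NeZero.one_le, natCast_self, natCast_zmod_val]
  module

theorem stmt_1_general (p : ℕ) (hp : p.Prime) (n : ℕ)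
    (S : Finset (Fin n → ZMod p)) (hS : S.card > (p ^ n - 1) / (p - 1)) :
    ∀ Q : Fin n → ZMod p, ∃ v ∈ S, ∃ w ∈ S, ∃ k : ℕ, k ≤ p - 1 ∧
      Q = k • v + (p - 1 - k) • w := by
  have : Fact p.Prime := ⟨hp⟩
  intro Q
  suffices ∃ v ∈ S, ∃ w ∈ S, ∃ c : ZMod p, Q = c • (v - w) - w by
    obtain ⟨v, hv, w, hw, c, rfl⟩ := this
    obtain ⟨k, hk, hkc⟩ := ZMod.exists_nsmul_add_nsmul_eq c v w
    exact ⟨v, hv, w, hw, k, hk, hkc.symm⟩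
  by_cases h0 : (0 : Fin n → ZMod p) ∈ S.image (· + Q)
  · obtain ⟨w, hw, hwQ⟩ := mem_image.1 h0
    exact ⟨w, hw, w, hw, 0, by simpa using (eq_neg_of_add_eq_zero_right hwQ)⟩
  have hcard :
      (Nat.card (Fin n → ZMod p) - 1) / (Nat.card (ZMod p) - 1) < #(S.image (· + Q)) := by
    rwa [card_image_of_injective _ (add_left_injective Q), Nat.card_fun, Nat.card_zmod,
      Nat.card_fin]
  obtain ⟨_, hx, _, hy, hxy, a, rfl⟩ := Projectivization.exists_ne_eq_smul_of_card_lt h0 hcard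
  obtain ⟨w, hw, rfl⟩ := mem_image.1 hx
  obtain ⟨v, hv, hvw⟩ := mem_image.1 hy
  have ha : a - 1 ≠ 0 := fun ha => hxy (by rw [sub_eq_zero.1 ha, one_smul])
  refine ⟨v, hv, w, hw, (a - 1)⁻¹, ?_⟩
  rw [show v - w = (a - 1) • (w + Q) by rw [sub_smul, one_smul, ← hvw]; abel, smul_smul,
    inv_mul_cancel₀ ha, one_smul, add_sub_cancel_left]

theorem stmt_1 (p : ℕ) (hp : p.Prime) (n : ℕ) (hn : 0 < n)
    (S : Finset (Fin n → ZMod p)) (hS : S.card > (p ^ n - 1) / (p - 1)) :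
    ∀ Q : Fin n → ZMod p, ∃ v ∈ S, ∃ w ∈ S, ∃ k : ℕ, k ≤ p - 1 ∧
      Q = k • v + (p - 1 - k) • w :=
  stmt_1_general p hp n S hS
end
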